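/- For every finite set P of propositional variables, the formula ⋀_{p∈P} p ∧ □⋀_{p∈P} p is satisfiable and complete for each of the logics KD4, S4, KD4+5, and S4+5. -/

import Mathlib

/-- Modal formulas in negation normal form, as in the paper:
φ ::= ⊥ | ⊤ | p | ¬p | φ∧φ | φ∨φ | □φ | ◇φ. -/
inductive Form : Type where
  | bot : Form
  | top : Form
  | pos : ℕ → Form
  | npos : ℕ → Form
  | and : Form → Form → Form
  | or : Form → Form → Form
  | box : Form → Form
  | dia : Form → Form
deriving DecidableEq

namespace Form

/-- Negation, defined as usual (by De Morgan dualities). -/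
def neg : Form → Form
  | bot => top
  | top => bot
  | pos p => npos p
  | npos p => pos p
  | and φ ψ => or φ.neg ψ.neg
  | or φ ψ => and φ.neg ψ.neg
  | box φ => dia φ.neg
  | dia φ => box φ.neg

/-- Implication φ → ψ, defined as usual. -/
def imp (φ ψ : Form) : Form := or φ.neg ψ

/-- Bi-implication φ ↔ ψ, defined as usual. -/
def biimp (φ ψ : Form) : Form := and (imp φ ψ) (imp ψ φ)

/-- P(φ): the set of propositional variables occurring in φ. -/
def vars : Form → Finset ℕ
  | bot => ∅
  | top => ∅
  | pos p => {p}
  | npos p => {p}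
  | and φ ψ => φ.vars ∪ ψ.vars
  | or φ ψ => φ.vars ∪ ψ.vars
  | box φ => φ.vars
  | dia φ => φ.vars

/-- Modal depth. -/
def md : Form → ℕ
  | bot => 0
  | top => 0
  | pos _ => 0
  | npos _ => 0
  | and φ ψ => max φ.md ψ.md
  | or φ ψ => max φ.md ψ.md
  | box φ => φ.md + 1
  | dia φ => φ.md + 1

/-- sub(φ): the set of subformulas of φ. -/
def subf : Form → Finset Form
  | bot => {bot}
  | top => {top}
  | pos p => {pos p}
  | npos p => {npos p}
  | and φ ψ => insert (and φ ψ) (φ.subf ∪ ψ.subf)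
  | or φ ψ => insert (or φ ψ) (φ.subf ∪ ψ.subf)
  | box φ => insert (box φ) φ.subf
  | dia φ => insert (dia φ) φ.subf

/-- s̄ub(φ) = sub(φ) ∪ {¬ψ : ψ ∈ sub(φ)}. -/
def subBar (φ : Form) : Finset Form := φ.subf ∪ φ.subf.image neg

/-- □^k φ : k nested boxes. -/
def boxIter : ℕ → Form → Form
  | 0, φ => φ
  | n + 1, φ => box (boxIter n φ)

def isDia : Form → Bool
  | dia _ => true
  | _ => false

def isBox : Form → Bool
  | box _ => true
  | _ => false

end Form

/-- Big conjunction over a finite set of formulas (⋀∅ = ⊤). -/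
noncomputable def bigAnd (s : Finset Form) : Form := s.toList.foldr Form.and Form.top

/-- Big disjunction over a finite set of formulas (⋁∅ = ⊥). -/
noncomputable def bigOr (s : Finset Form) : Form := s.toList.foldr Form.or Form.bot

/-- th(a) = ⋀ a. -/
noncomputable def th (a : Finset Form) : Form := bigAnd a

/-- A finite Kripke model: a nonempty finite set of states, an accessibility
relation and a valuation. -/
structure Model : Type 1 where
  W : Type
  nonempty : Nonempty W
  finite : Finite W
  R : W → W → Prop
  V : W → Set ℕ

/-- Satisfaction M,w ⊨ φ. -/
def Model.sat (M : Model) : M.W → Form → Prop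
  | _, .bot => False
  | _, .top => True
  | w, .pos p => p ∈ M.V w
  | w, .npos p => p ∉ M.V w
  | w, .and φ ψ => M.sat w φ ∧ M.sat w ψ
  | w, .or φ ψ => M.sat w φ ∨ M.sat w ψ
  | w, .box φ => ∀ v, M.R w v → M.sat v φ
  | w, .dia φ => ∃ v, M.R w v ∧ M.sat v φ

/-- The six base logics K, D, T, K4, KD4, S4. -/
inductive BaseLogic : Type where
  | K | D | T | K4 | KD4 | S4
deriving DecidableEq

/-- A logic: a base logic, possibly extended by axiom 5. -/
structure Logic : Type where
  base : BaseLogic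
  has5 : Bool
deriving DecidableEq

def Logic.K : Logic := ⟨.K, false⟩
def Logic.D : Logic := ⟨.D, false⟩
def Logic.T : Logic := ⟨.T, false⟩
def Logic.K4 : Logic := ⟨.K4, false⟩
def Logic.KD4 : Logic := ⟨.KD4, false⟩
def Logic.S4 : Logic := ⟨.S4, false⟩

/-- l + 5. -/
def BaseLogic.plus5 (b : BaseLogic) : Logic := ⟨b, true⟩

/-- M is a model for the logic l (frame conditions). -/
def Model.IsFor (M : Model) (l : Logic) : Prop :=
  (match l.base with
    | .K => True
    | .D => ∀ w, ∃ v, M.R w v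
    | .T => ∀ w, M.R w w
    | .K4 => ∀ a b c, M.R a b → M.R b c → M.R a c
    | .KD4 => (∀ w, ∃ v, M.R w v) ∧ (∀ a b c, M.R a b → M.R b c → M.R a c)
    | .S4 => (∀ w, M.R w w) ∧ (∀ a b c, M.R a b → M.R b c → M.R a c))
  ∧ (l.has5 = true → ∀ a b c, M.R a b → M.R a c → M.R b c)

/-- φ is satisfiable for l: satisfied at some state of some finite model for l. -/
def Satisfiable (l : Logic) (φ : Form) : Prop :=
  ∃ M : Model, M.IsFor l ∧ ∃ w : M.W, M.sat w φ

/-- φ is valid for l: satisfied at every state of every finite model for l. -/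
def Valid (l : Logic) (φ : Form) : Prop :=
  ∀ M : Model, M.IsFor l → ∀ w : M.W, M.sat w φ

/-- φ is complete for l: for every ψ ∈ L(P(φ)), φ→ψ or φ→¬ψ is valid for l. -/
def Complete (l : Logic) (φ : Form) : Prop :=
  ∀ ψ : Form, ψ.vars ⊆ φ.vars → (Valid l (φ.imp ψ) ∨ Valid l (φ.imp ψ.neg))

/-- Z is a bisimulation modulo P from M to M'. -/
def IsBisim (P : Set ℕ) (M M' : Model) (Z : M.W → M'.W → Prop) : Prop :=
  (∃ s s', Z s s') ∧
  ∀ s s', Z s s' →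
    (M.V s ∩ P = M'.V s' ∩ P) ∧
    (∀ t, M.R s t → ∃ t', M'.R s' t' ∧ Z t t') ∧
    (∀ t', M'.R s' t' → ∃ t, M.R s t ∧ Z t t')

/-- (M,a) ∼_P (M',a'). -/
def Bisimilar (P : Set ℕ) (M : Model) (a : M.W) (M' : Model) (a' : M'.W) : Prop :=
  ∃ Z, IsBisim P M M' Z ∧ Z a a'

/-- (M,a) ≡_P (M',a'): the two pointed models satisfy the same formulas of L(P). -/
def EquivP (P : Set ℕ) (M : Model) (a : M.W) (M' : Model) (a' : M'.W) : Prop :=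
  ∀ φ : Form, ↑φ.vars ⊆ P → (M.sat a φ ↔ M'.sat a' φ)

/-- (M,s) is flat (for base logic l, with axiom 5): the carrier is {s}∪W and
R = R1 ∪ R2 with R1 ⊆ {s}×W, R2 an equivalence relation on W, and s ∈ W if
l ∈ {T,S4}. -/
def Flat (l : BaseLogic) (M : Model) (s : M.W) : Prop :=
  ∃ W : Set M.W, (∀ w, w = s ∨ w ∈ W) ∧
    ∃ R1 R2 : M.W → M.W → Prop,
      (∀ x y, M.R x y ↔ (R1 x y ∨ R2 x y)) ∧
      (∀ x y, R1 x y → x = s ∧ y ∈ W) ∧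
      (∀ x y, R2 x y → x ∈ W ∧ y ∈ W) ∧
      (∀ x ∈ W, R2 x x) ∧
      (∀ x y, R2 x y → R2 y x) ∧
      (∀ x y z, R2 x y → R2 y z → R2 x z) ∧
      ((l = .T ∨ l = .S4) → s ∈ W)

/-- A maximal state for l with respect to φ: a maximally l-consistent subset
of s̄ub(φ). -/
def MaxState (l : Logic) (φ : Form) (a : Finset Form) : Prop :=
  a ⊆ φ.subBar ∧ Satisfiable l (th a) ∧ ∀ ψ ∈ φ.subf, ψ ∈ a ∨ ψ.neg ∈ a

/-- D(x) = {◇ψ : ◇ψ ∈ x}. -/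
def DSet (x : Finset Form) : Finset Form := x.filter (fun ψ => ψ.isDia = true)

/-- B(x) = {□ψ : □ψ ∈ x}. -/
def BSet (x : Finset Form) : Finset Form := x.filter (fun ψ => ψ.isBox = true)

/-- A view: a parent-state and a finite set of children-states. -/
structure View : Type where
  parent : Finset Form
  children : Finset (Finset Form)

/-- The view is with respect to φ: all its states are subsets of s̄ub(φ). -/
def View.WF (φ : Form) (S : View) : Prop :=
  S.parent ⊆ φ.subBar ∧ ∀ c ∈ S.children, c ⊆ φ.subBar

/-- A set of formulas is l-closed. -/
def LClosed (l : Logic) (P : Finset ℕ) (s : Finset Form) : Prop :=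
  (∀ φ1 φ2 : Form, Form.and φ1 φ2 ∈ s → φ1 ∈ s ∧ φ2 ∈ s) ∧
  (∀ φ1 φ2 : Form, Form.or φ1 φ2 ∈ s → φ1 ∈ s ∨ φ2 ∈ s) ∧
  ((l.base = .T ∨ l.base = .S4) → ∀ ψ : Form, Form.box ψ ∈ s → ψ ∈ s) ∧
  (∀ p ∈ P, Form.pos p ∈ s ∨ Form.npos p ∈ s)

/-- The view S is l-complete. -/
def ViewLComplete (l : Logic) (P : Finset ℕ) (S : View) : Prop :=
  LClosed l P S.parent ∧
  (∀ c ∈ S.children, LClosed l P c) ∧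
  (∀ ψ : Form, Form.dia ψ ∈ S.parent → ∃ c ∈ S.children, ψ ∈ c) ∧
  (∀ ψ : Form, Form.box ψ ∈ S.parent → ∀ c ∈ S.children, ψ ∈ c) ∧
  ((l.base = .K4 ∨ l.base = .KD4 ∨ l.base = .S4) →
    ∀ ψ : Form, Form.box ψ ∈ S.parent → ∀ c ∈ S.children, Form.box ψ ∈ c) ∧
  (l.base = .KD4 → S.children.Nonempty)

/-- The view S is consistent for l: every one of its states is consistent. -/
def ViewConsistent (l : Logic) (S : View) : Prop :=
  Satisfiable l (th S.parent) ∧ ∀ c ∈ S.children, Satisfiable l (th c)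

/-- d = max{md(th(c')) : c' ∈ C(S)}. -/
noncomputable def childDepth (S : View) : ℕ := S.children.sup (fun c => (th c).md)

/-- A K-maximal child-state: a maximally K-consistent subset of s̄ub_d(φ). -/
def KMaxChild (φ : Form) (d : ℕ) (c : Finset Form) : Prop :=
  c ⊆ φ.subBar.filter (fun ψ => ψ.md ≤ d) ∧
  Satisfiable Logic.K (th c) ∧
  ∀ ψ ∈ φ.subf, ψ.md ≤ d → (ψ ∈ c ∨ ψ.neg ∈ c)

/-- S' completes S (for logic l, with respect to φ). -/
def ViewCompletes (l : Logic) (φ : Form) (S' S : View) : Prop :=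
  ViewLComplete l φ.vars S' ∧
  S.parent ⊆ S'.parent ∧
  (∀ a ∈ S.children, ∃ a' ∈ S'.children, a ⊆ a') ∧
  (l.base = .K → ∀ a' ∈ S'.children, KMaxChild φ (childDepth S') a') ∧
  (l.base ≠ .K → ∀ a' ∈ S'.children, MaxState l φ a')

/-- The depth-0 normal form ⋀_{p∈S} p ∧ ⋀_{p∈P∖S} ¬p. -/
noncomputable def nf0 (P S : Finset ℕ) : Form :=
  Form.and (bigAnd (S.image Form.pos)) (bigAnd ((P \ S).image Form.npos))

/-- Fine's normal forms F_P^d. -/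
noncomputable def NF (P : Finset ℕ) : ℕ → Set Form
  | 0 => { χ | ∃ S ⊆ P, χ = nf0 P S }
  | d + 1 => { χ | ∃ S : Finset Form, ↑S ⊆ NF P d ∧ ∃ S0 ⊆ P,
      χ = Form.and (nf0 P S0)
            (Form.and (bigAnd (S.image Form.dia)) (Form.box (bigOr S))) }

/-- φ is complete up to its depth for l. -/
def CompleteUpToDepth (l : Logic) (φ : Form) : Prop :=
  ∀ ψ : Form, ψ.vars ⊆ φ.vars → ψ.md ≤ φ.md →
    (Valid l (φ.imp ψ) ∨ Valid l (φ.imp ψ.neg))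


/-!
In a serial transitive model, a state satisfying `⋀P ∧ □⋀P` sees only states where every
variable of `P` is true. Relating all of these to the single state of the reflexive one-point
model with valuation `P` is therefore a bisimulation modulo `P` (seriality supplies the
back condition), so by bisimulation invariance every `ψ ∈ L(P)` has at such a state the
truth value it has in the one-point model. That model satisfies the formula and is a model
of every logic, since its relation is total.
-/

namespace Model

variable (M : Model)

theorem sat_neg (ψ : Form) (v : M.W) : M.sat v ψ.neg ↔ ¬ M.sat v ψ := by
  induction ψ generalizing v with
  | and φ ψ ih₁ ih₂ => simp only [Form.neg, sat, ih₁, ih₂]; tauto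
  | or φ ψ ih₁ ih₂ => simp only [Form.neg, sat, ih₁, ih₂]; tauto
  | box φ ih => simp [Form.neg, sat, ih]
  | dia φ ih => simp [Form.neg, sat, ih]
  | _ => simp [Form.neg, sat]

theorem sat_imp (φ ψ : Form) (v : M.W) : M.sat v (φ.imp ψ) ↔ (M.sat v φ → M.sat v ψ) := by
  rw [Form.imp, sat, sat_neg, imp_iff_not_or]

theorem sat_bigAnd (s : Finset Form) (v : M.W) :
    M.sat v (bigAnd s) ↔ ∀ χ ∈ s, M.sat v χ := by
  suffices ∀ L : List Form, M.sat v (L.foldr Form.and Form.top) ↔ ∀ χ ∈ L, M.sat v χ by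
    simpa [bigAnd] using this s.toList
  intro L
  induction L with
  | nil => simp [sat]
  | cons χ L ih => simp [sat, ih]

theorem sat_bigAnd_image_pos (P : Finset ℕ) (v : M.W) :
    M.sat v (bigAnd (P.image Form.pos)) ↔ ↑P ⊆ M.V v := by
  simp [sat_bigAnd, sat, Set.subset_def]

end Model

theorem Form.mem_vars_bigAnd (s : Finset Form) (p : ℕ) :
    p ∈ (bigAnd s).vars ↔ ∃ χ ∈ s, p ∈ χ.vars := by
  suffices ∀ L : List Form, p ∈ (L.foldr Form.and Form.top).vars ↔ ∃ χ ∈ L, p ∈ χ.vars by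
    simpa [bigAnd] using this s.toList
  intro L
  induction L with
  | nil => simp [vars]
  | cons χ L ih => simp [vars, ih]

theorem Form.vars_bigAnd_image_pos (P : Finset ℕ) : (bigAnd (P.image pos)).vars ⊆ P := by
  intro p hp
  obtain ⟨_, hχ, hp⟩ := (mem_vars_bigAnd _ p).mp hp
  obtain ⟨q, hq, rfl⟩ := Finset.mem_image.mp hχ
  rw [vars, Finset.mem_singleton] at hp
  exact hp ▸ hq

theorem Bisimilar.equivP {P : Set ℕ} {M N : Model} {a : M.W} {b : N.W}
    (h : Bisimilar P M a N b) : EquivP P M a N b := by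
  obtain ⟨Z, ⟨-, hZ⟩, hab⟩ := h
  intro φ hφ
  induction φ generalizing a b with
  | bot | top => simp [Model.sat]
  | pos p | npos p =>
    have hp : p ∈ P := hφ (by simp [Form.vars])
    have hV := congrArg (p ∈ ·) (hZ a b hab).1
    simp only [Set.mem_inter_iff, hp, and_true] at hV
    simp only [Model.sat, hV]
  | and φ ψ ih₁ ih₂ | or φ ψ ih₁ ih₂ =>
    have h₁ : ↑φ.vars ⊆ P := fun p hp => hφ (by simp_all [Form.vars])
    have h₂ : ↑ψ.vars ⊆ P := fun p hp => hφ (by simp_all [Form.vars])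
    simp only [Model.sat, ih₁ hab h₁, ih₂ hab h₂]
  | box φ ih =>
    obtain ⟨-, forth, back⟩ := hZ a b hab
    simp only [Model.sat]
    constructor
    · intro ha b' hb'
      obtain ⟨a', ha', hZ'⟩ := back b' hb'
      exact (ih hZ' hφ).mp (ha a' ha')
    · intro hb a' ha'
      obtain ⟨b', hb', hZ'⟩ := forth a' ha'
      exact (ih hZ' hφ).mpr (hb b' hb')
  | dia φ ih =>
    obtain ⟨-, forth, back⟩ := hZ a b hab
    simp only [Model.sat]
    constructor
    · rintro ⟨a', ha', hs⟩
      obtain ⟨b', hb', hZ'⟩ := forth a' ha'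
      exact ⟨b', hb', (ih hZ' hφ).mp hs⟩
    · rintro ⟨b', hb', hs⟩
      obtain ⟨a', ha', hZ'⟩ := back b' hb'
      exact ⟨a', ha', (ih hZ' hφ).mpr hs⟩

theorem complete_of_forall_equivP {l : Logic} {φ : Form} {Q : Set ℕ} (hφ : ↑φ.vars ⊆ Q)
    (N : Model) (n : N.W)
    (h : ∀ M : Model, M.IsFor l → ∀ w, M.sat w φ → EquivP Q M w N n) : Complete l φ := by
  intro ψ hψ
  have hψQ : ↑ψ.vars ⊆ Q := (Finset.coe_subset.mpr hψ).trans hφ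
  by_cases hn : N.sat n ψ
  · exact .inl fun M hM w => (M.sat_imp _ _ w).mpr fun hw => (h M hM w hw ψ hψQ).mpr hn
  · refine .inr fun M hM w => (M.sat_imp _ _ w).mpr fun hw => ?_
    exact (M.sat_neg ψ w).mpr fun hs => hn ((h M hM w hw ψ hψQ).mp hs)

def pointModel (V : Set ℕ) : Model :=
  ⟨Unit, ⟨()⟩, inferInstance, fun _ _ => True, fun _ => V⟩

theorem pointModel_isFor (V : Set ℕ) (l : Logic) : (pointModel V).IsFor l := by
  refine ⟨?_, fun _ _ _ _ _ _ => trivial⟩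
  cases l.base <;> simp [pointModel]

theorem Model.IsFor.serial_transitive {M : Model} {l : Logic} (hM : M.IsFor l)
    (hl : l.base = .KD4 ∨ l.base = .S4) :
    (∀ u, ∃ v, M.R u v) ∧ (∀ a b c, M.R a b → M.R b c → M.R a c) := by
  rcases l with ⟨b, _⟩
  obtain ⟨hM, -⟩ := hM
  rcases hl with rfl | rfl
  exacts [hM, ⟨fun u => ⟨u, hM.1 u⟩, hM.2⟩]

theorem bisimilar_pointModel {M : Model} (hser : ∀ u, ∃ v, M.R u v)
    (htr : ∀ a b c, M.R a b → M.R b c → M.R a c) {P : Set ℕ} {w : M.W}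
    (hP : ∀ v, (v = w ∨ M.R w v) → P ⊆ M.V v) : Bisimilar P M w (pointModel P) () := by
  have hreach : ∀ s t, (s = w ∨ M.R w s) → M.R s t → M.R w t := by
    rintro s t (rfl | hws) hst
    exacts [hst, htr _ _ _ hws hst]
  refine ⟨fun v _ => v = w ∨ M.R w v, ⟨⟨w, (), .inl rfl⟩, fun s _ hs => ⟨?_, ?_, ?_⟩⟩, .inl rfl⟩
  · simp [pointModel, Set.inter_eq_right.mpr (hP s hs)]
  · exact fun t hst => ⟨(), trivial, .inr (hreach s t hs hst)⟩
  · intro _ _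
    obtain ⟨t, hst⟩ := hser s
    exact ⟨t, hst, .inr (hreach s t hs hst)⟩

theorem satisfiable_and_complete_allTrue {l : Logic} (hl : l.base = .KD4 ∨ l.base = .S4)
    (P : Finset ℕ) :
    Satisfiable l (.and (bigAnd (P.image .pos)) (.box (bigAnd (P.image .pos)))) ∧
      Complete l (.and (bigAnd (P.image .pos)) (.box (bigAnd (P.image .pos)))) := by
  have hpoint : (pointModel P).sat () (bigAnd (P.image .pos)) :=
    ((pointModel P).sat_bigAnd_image_pos P ()).mpr subset_rfl
  refine ⟨⟨pointModel P, pointModel_isFor _ l, (), hpoint, fun _ _ => hpoint⟩, ?_⟩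
  have hvars : ↑(Form.and (bigAnd (P.image .pos)) (.box (bigAnd (P.image .pos)))).vars ⊆
      (P : Set ℕ) := by
    simpa [Form.vars] using Form.vars_bigAnd_image_pos P
  refine complete_of_forall_equivP hvars (pointModel P) () fun M hM w ⟨hw, hbox⟩ => ?_
  obtain ⟨hser, htr⟩ := hM.serial_transitive hl
  refine (bisimilar_pointModel hser htr fun v hv => ?_).equivP
  rcases hv with rfl | hv
  exacts [(M.sat_bigAnd_image_pos P _).mp hw, (M.sat_bigAnd_image_pos P v).mp (hbox v hv)]

/-- ⋀_{p∈P} p ∧ □⋀_{p∈P} p is satisfiable and complete for KD4,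
S4, KD4+5, and S4+5. -/
theorem stmt8 (P : Finset ℕ) :
    (Satisfiable Logic.KD4
        (Form.and (bigAnd (P.image Form.pos)) (Form.box (bigAnd (P.image Form.pos)))) ∧
     Complete Logic.KD4
        (Form.and (bigAnd (P.image Form.pos)) (Form.box (bigAnd (P.image Form.pos))))) ∧
    (Satisfiable Logic.S4
        (Form.and (bigAnd (P.image Form.pos)) (Form.box (bigAnd (P.image Form.pos)))) ∧
     Complete Logic.S4
        (Form.and (bigAnd (P.image Form.pos)) (Form.box (bigAnd (P.image Form.pos))))) ∧
    (Satisfiable (BaseLogic.plus5 .KD4)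
        (Form.and (bigAnd (P.image Form.pos)) (Form.box (bigAnd (P.image Form.pos)))) ∧
     Complete (BaseLogic.plus5 .KD4)
        (Form.and (bigAnd (P.image Form.pos)) (Form.box (bigAnd (P.image Form.pos))))) ∧
    (Satisfiable (BaseLogic.plus5 .S4)
        (Form.and (bigAnd (P.image Form.pos)) (Form.box (bigAnd (P.image Form.pos)))) ∧
     Complete (BaseLogic.plus5 .S4)
        (Form.and (bigAnd (P.image Form.pos)) (Form.box (bigAnd (P.image Form.pos))))) :=
  ⟨satisfiable_and_complete_allTrue (.inl rfl) P, satisfiable_and_complete_allTrue (.inr rfl) P,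
    satisfiable_and_complete_allTrue (.inl rfl) P, satisfiable_and_complete_allTrue (.inr rfl) P⟩
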